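/- arXiv:2508.21642 — 2 statements merged into one kernel-verified Lean document; each statement's English description precedes it below -/
import Mathlib

section
/- Let Ω ⊂ ℝⁿ be bounded, let m₁ and m₂ be finite Borel measures on cl(Ω), and let a, b : cl(Ω) → ℝⁿ be Borel measurable with ∫|a−b| dm₁ < ∞. Then d*((I,a)#m₁, (I,b)#m₂) ≤ ∫_{cl(Ω)} |a(x) − b(x)| dm₁(x) + ‖m₁ − m₂‖_{TV}, where ‖m₁ − m₂‖_{TV} = |m₁ − m₂|(cl(Ω)) is the total variation distance. -/
open Set MeasureTheory Filter
open scoped RealInnerProductSpace ENNReal Topology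

noncomputable section

namespace MFG

/-- Euclidean space `ℝⁿ`. -/
abbrev Euc (n : ℕ) := EuclideanSpace ℝ (Fin n)

variable {n : ℕ}

/-- The pushforward `(I,α)#m` of a measure `m` under `x ↦ (x, α x)`. -/
def pushfwd (m : Measure (Euc n)) (α : Euc n → Euc n) : Measure (Euc n × Euc n) :=
  Measure.map (fun x => (x, α x)) m

/-- `Λ_q(μ) = (∫ |α|^q dμ(x,α))^{1/q}`. -/
def LambdaQ (q : ℝ) (μ : Measure (Euc n × Euc n)) : ℝ :=
  (∫ z, ‖z.2‖ ^ q ∂μ) ^ (1 / q)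

/-- `Λ_∞(μ)`: the smallest `R ≥ 0` such that `μ` is supported in `{|α| ≤ R}`. -/
def LambdaInf (μ : Measure (Euc n × Euc n)) : ℝ :=
  sInf {R : ℝ | 0 ≤ R ∧ μ {z : Euc n × Euc n | R < ‖z.2‖} = 0}

/-- `L^q(ρ)` norm of a vector field. -/
def LqNormV (q : ℝ) (ρ : Measure (Euc n)) (f : Euc n → Euc n) : ℝ :=
  (∫ x, ‖f x‖ ^ q ∂ρ) ^ (1 / q)

/-- `L^q(ρ)` norm of a scalar function. -/
def LqNormR (q : ℝ) (ρ : Measure (Euc n)) (f : Euc n → ℝ) : ℝ :=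
  (∫ x, |f x| ^ q ∂ρ) ^ (1 / q)

/-- The bounded-Lipschitz metric `d*` on measures on `cl(Ω) × ℝⁿ`. -/
def dstar (μ ν : Measure (Euc n × Euc n)) : ℝ :=
  sSup {r : ℝ | ∃ φ : Euc n × Euc n → ℝ, LipschitzWith 1 φ ∧ (∀ z, |φ z| ≤ 1) ∧
    r = (∫ z, φ z ∂μ) - ∫ z, φ z ∂ν}

/-- The bounded-Lipschitz metric `d*` on measures on `cl(Ω)`. -/
def dstarX (μ ν : Measure (Euc n)) : ℝ :=
  sSup {r : ℝ | ∃ φ : Euc n → ℝ, LipschitzWith 1 φ ∧ (∀ z, |φ z| ≤ 1) ∧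
    r = (∫ z, φ z ∂μ) - ∫ z, φ z ∂ν}

/-- The measure `f dx` on `Ω` with Lebesgue density `f`. -/
def densMeas (Ω : Set (Euc n)) (f : Euc n → ℝ) : Measure (Euc n) :=
  (volume.restrict Ω).withDensity fun x => ENNReal.ofReal (f x)

/-- `∂_t u`. -/
def pderivT (u : ℝ → Euc n → ℝ) (t : ℝ) (x : Euc n) : ℝ :=
  deriv (fun s => u s x) t

/-- `D_x u`, the spatial gradient. -/
def spaceGrad (u : ℝ → Euc n → ℝ) (t : ℝ) (x : Euc n) : Euc n :=
  gradient (u t) x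

/-- The Laplacian of a function on `ℝⁿ`. -/
def lapl (f : Euc n → ℝ) (x : Euc n) : ℝ :=
  ∑ i : Fin n, fderiv ℝ (fun y => fderiv ℝ f y (EuclideanSpace.single i 1)) x
    (EuclideanSpace.single i 1)

/-- The (spatial) divergence of a vector field on `ℝⁿ`. -/
def divg (F : Euc n → Euc n) (x : Euc n) : ℝ :=
  ∑ i : Fin n, fderiv ℝ (fun y => F y i) x (EuclideanSpace.single i 1)

/-- `u ∈ C^{1,2}(Q)`: continuous on `Q = [0,T] × cl(Ω)`, once differentiable in time,
twice in space. -/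
def C12 (T : ℝ) (Ω : Set (Euc n)) (u : ℝ → Euc n → ℝ) : Prop :=
  ContinuousOn (fun z : ℝ × Euc n => u z.1 z.2) (Icc 0 T ×ˢ closure Ω) ∧
  ∀ t ∈ Icc (0:ℝ) T, ∀ x ∈ closure Ω,
    DifferentiableAt ℝ (fun s => u s x) t ∧ ContDiffAt ℝ 2 (u t) x

/-- `sup_Q v`. -/
def supQ (T : ℝ) (Ω : Set (Euc n)) (v : ℝ → Euc n → ℝ) : ℝ :=
  sSup ((fun z : ℝ × Euc n => v z.1 z.2) '' (Icc 0 T ×ˢ closure Ω))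

/-- `sup_{cl Ω} v`. -/
def supX (Ω : Set (Euc n)) (v : Euc n → ℝ) : ℝ :=
  sSup (v '' closure Ω)

/-- `N` is the outward unit normal vector field on `∂Ω`. -/
def OutwardNormal (Ω : Set (Euc n)) (N : Euc n → Euc n) : Prop :=
  ∀ x ∈ frontier Ω, ‖N x‖ = 1 ∧
    ∀ᶠ s : ℝ in 𝓝[>] (0:ℝ), x + s • N x ∉ closure Ω ∧ x - s • N x ∈ Ω

/-- `Θ_θ(μ)`: pushforward of `μ` under `(x,α) ↦ (x, α/θ)`. -/
def Theta (θ : ℝ) (μ : Measure (Euc n × Euc n)) : Measure (Euc n × Euc n) :=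
  Measure.map (fun z : Euc n × Euc n => (z.1, θ⁻¹ • z.2)) μ

/-- `L^θ(t,x,α,μ) = θ L(t,x,α/θ,Θ_θ(μ))`. -/
def Ltheta (L : ℝ → Euc n → Euc n → Measure (Euc n × Euc n) → ℝ)
    (θ t : ℝ) (x a : Euc n) (μ : Measure (Euc n × Euc n)) : ℝ :=
  θ * L t x (θ⁻¹ • a) (Theta θ μ)

/-- `H^θ`, the Legendre transform of `L^θ` in the velocity variable. -/
def Htheta (L : ℝ → Euc n → Euc n → Measure (Euc n × Euc n) → ℝ)
    (θ t : ℝ) (x p : Euc n) (μ : Measure (Euc n × Euc n)) : ℝ :=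
  ⨆ a : Euc n, (⟪p, a⟫ - Ltheta L θ t x a μ)

/-- Sequential continuity on `[0,T] × cl(Ω) × ℝⁿ × 𝔐_{∞,R}(cl(Ω)×ℝⁿ)` (every `R`),
the measure argument carrying the metric `d*` (scalar-valued version). -/
def MContR (T : ℝ) (Ω : Set (Euc n))
    (F : ℝ → Euc n → Euc n → Measure (Euc n × Euc n) → ℝ) : Prop :=
  ∀ R > (0:ℝ), ∀ (tk : ℕ → ℝ) (xk pk : ℕ → Euc n)
    (μk : ℕ → Measure (Euc n × Euc n)) (t : ℝ) (x p : Euc n)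
    (μ : Measure (Euc n × Euc n)),
    (∀ k, tk k ∈ Icc 0 T) → t ∈ Icc 0 T →
    (∀ k, xk k ∈ closure Ω) → x ∈ closure Ω →
    (∀ k, μk k Set.univ ≤ 1 ∧ μk k {z : Euc n × Euc n | R < ‖z.2‖} = 0) →
    μ Set.univ ≤ 1 → μ {z : Euc n × Euc n | R < ‖z.2‖} = 0 →
    Tendsto tk atTop (𝓝 t) → Tendsto xk atTop (𝓝 x) → Tendsto pk atTop (𝓝 p) →
    Tendsto (fun k => dstar (μk k) μ) atTop (𝓝 0) →
    Tendsto (fun k => F (tk k) (xk k) (pk k) (μk k)) atTop (𝓝 (F t x p μ))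

/-- Sequential continuity (vector-valued version). -/
def MContV (T : ℝ) (Ω : Set (Euc n))
    (F : ℝ → Euc n → Euc n → Measure (Euc n × Euc n) → Euc n) : Prop :=
  ∀ R > (0:ℝ), ∀ (tk : ℕ → ℝ) (xk pk : ℕ → Euc n)
    (μk : ℕ → Measure (Euc n × Euc n)) (t : ℝ) (x p : Euc n)
    (μ : Measure (Euc n × Euc n)),
    (∀ k, tk k ∈ Icc 0 T) → t ∈ Icc 0 T →
    (∀ k, xk k ∈ closure Ω) → x ∈ closure Ω →
    (∀ k, μk k Set.univ ≤ 1 ∧ μk k {z : Euc n × Euc n | R < ‖z.2‖} = 0) →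
    μ Set.univ ≤ 1 → μ {z : Euc n × Euc n | R < ‖z.2‖} = 0 →
    Tendsto tk atTop (𝓝 t) → Tendsto xk atTop (𝓝 x) → Tendsto pk atTop (𝓝 p) →
    Tendsto (fun k => dstar (μk k) μ) atTop (𝓝 0) →
    Tendsto (fun k => F (tk k) (xk k) (pk k) (μk k)) atTop (𝓝 (F t x p μ))

end MFG

/-!
Test against a 1-Lipschitz `φ` with `|φ| ≤ 1` and split
`∫ φ(x, a x) dm₁ - ∫ φ(x, b x) dm₂` at `∫ φ(x, b x) dm₁`. The first difference is at most
`∫ |a - b| dm₁` because `φ` is 1-Lipschitz in its second argument. For the second, the Jordan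
decomposition `(m₁ - m₂, m₂ - m₁)` of `m₁ - m₂` gives `m₁ + (m₂ - m₁) = m₂ + (m₁ - m₂)`, so it
equals `∫ φ d(m₁ - m₂) - ∫ φ d(m₂ - m₁)`, which `|φ| ≤ 1` bounds by the total variation. Since
both measures live on `cl(Ω)`, so does their total variation.
-/

namespace MeasureTheory.Measure

variable {X : Type*} [MeasurableSpace X] {μ ν : Measure X} [IsFiniteMeasure μ] [IsFiniteMeasure ν]

lemma add_sub_eq_add_sub_rev : μ + (ν - μ) = ν + (μ - ν) := by
  rw [← toSignedMeasure_eq_toSignedMeasure_iff, toSignedMeasure_add, toSignedMeasure_add,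
    sub_eq_sub_iff_add_eq_add.mp sub_toSignedMeasure_eq_toSignedMeasure_sub, add_comm]

lemma totalVariation_toSignedMeasure_sub :
    (μ.toSignedMeasure - ν.toSignedMeasure).totalVariation = (μ - ν) + (ν - μ) := by
  rw [SignedMeasure.totalVariation, toJordanDecomposition_toSignedMeasure_sub,
    jordanDecompositionOfToSignedMeasureSub_posPart,
    jordanDecompositionOfToSignedMeasureSub_negPart]

lemma totalVariation_toSignedMeasure_sub_le :
    (μ.toSignedMeasure - ν.toSignedMeasure).totalVariation ≤ μ + ν := by
  rw [totalVariation_toSignedMeasure_sub]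
  exact add_le_add sub_le sub_le

lemma totalVariation_toSignedMeasure_sub_apply_eq_univ_of_compl {s : Set X}
    (hμ : μ sᶜ = 0) (hν : ν sᶜ = 0) :
    (μ.toSignedMeasure - ν.toSignedMeasure).totalVariation s =
      (μ.toSignedMeasure - ν.toSignedMeasure).totalVariation univ :=
  measure_congr <| ae_eq_univ.2 <|
    absolutelyContinuous_of_le totalVariation_toSignedMeasure_sub_le <| by simp [hμ, hν]

lemma integral_sub_integral_le_totalVariation {f : X → ℝ} (hf : Measurable f)
    (hf_le : ∀ x, |f x| ≤ 1) :
    ∫ x, f x ∂μ - ∫ x, f x ∂ν ≤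
      (μ.toSignedMeasure - ν.toSignedMeasure).totalVariation.real univ := by
  have norm_le : ∀ x, ‖f x‖ ≤ 1 := hf_le
  have integrable (ρ : Measure X) [IsFiniteMeasure ρ] : Integrable f ρ :=
    .of_bound hf.aestronglyMeasurable 1 (ae_of_all _ norm_le)
  have integral_le (ρ : Measure X) [IsFiniteMeasure ρ] : |∫ x, f x ∂ρ| ≤ ρ.real univ := by
    simpa using norm_integral_le_of_norm_le_const (μ := ρ) (C := 1) (ae_of_all _ norm_le)
  have h_split : ∫ x, f x ∂μ + ∫ x, f x ∂(ν - μ) = ∫ x, f x ∂ν + ∫ x, f x ∂(μ - ν) := by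
    rw [← integral_add_measure (integrable _) (integrable _),
      ← integral_add_measure (integrable _) (integrable _), add_sub_eq_add_sub_rev]
  rw [totalVariation_toSignedMeasure_sub, measureReal_add_apply]
  linarith [le_abs_self (∫ x, f x ∂(μ - ν)), neg_abs_le (∫ x, f x ∂(ν - μ)),
    integral_le (μ - ν), integral_le (ν - μ)]

end MeasureTheory.Measure

lemma LipschitzWith.sub_le_dist_snd {X E : Type*} [PseudoMetricSpace X] [PseudoMetricSpace E]
    {φ : X × E → ℝ} (hφ : LipschitzWith 1 φ) (x : X) (y y' : E) :
    φ (x, y) - φ (x, y') ≤ dist y y' := by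
  simpa [Real.dist_eq] using
    (le_abs_self _).trans ((hφ.comp (LipschitzWith.prodMk_left x)).dist_le_mul y y')

theorem integral_graph_sub_integral_graph_le {X E : Type*} [PseudoMetricSpace X]
    [MeasurableSpace X] [OpensMeasurableSpace X] [NormedAddCommGroup E] [MeasurableSpace E]
    [OpensMeasurableSpace E] [SecondCountableTopology E]
    {φ : X × E → ℝ} (hφ : LipschitzWith 1 φ) (hφ_le : ∀ z, |φ z| ≤ 1)
    {μ ν : Measure X} [IsFiniteMeasure μ] [IsFiniteMeasure ν] {a b : X → E}
    (ha : Measurable a) (hb : Measurable b) (hint : Integrable (fun x => ‖a x - b x‖) μ) :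
    ∫ x, φ (x, a x) ∂μ - ∫ x, φ (x, b x) ∂ν ≤
      ∫ x, ‖a x - b x‖ ∂μ + (μ.toSignedMeasure - ν.toSignedMeasure).totalVariation.real univ := by
  have measurable_graph {c : X → E} (hc : Measurable c) : Measurable fun x => φ (x, c x) :=
    hφ.continuous.measurable.comp (measurable_id.prodMk hc)
  have integrable_graph {c : X → E} (hc : Measurable c) : Integrable (fun x => φ (x, c x)) μ :=
    .of_bound (measurable_graph hc).aestronglyMeasurable 1 (ae_of_all _ fun x => hφ_le _)
  have h_transport : ∫ x, φ (x, a x) ∂μ - ∫ x, φ (x, b x) ∂μ ≤ ∫ x, ‖a x - b x‖ ∂μ := by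
    rw [← integral_sub (integrable_graph ha) (integrable_graph hb)]
    exact integral_mono ((integrable_graph ha).sub (integrable_graph hb)) hint fun x =>
      (hφ.sub_le_dist_snd x (a x) (b x)).trans_eq (dist_eq_norm _ _)
  have h_mass := Measure.integral_sub_integral_le_totalVariation (μ := μ) (ν := ν)
    (measurable_graph hb) fun x => hφ_le _
  linarith

namespace MFG

lemma integral_pushfwd {n : ℕ} {φ : Euc n × Euc n → ℝ} (hφ : Continuous φ) {α : Euc n → Euc n}
    (hα : Measurable α) (m : Measure (Euc n)) :
    ∫ z, φ z ∂pushfwd m α = ∫ x, φ (x, α x) ∂m :=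
  integral_map (measurable_id.prodMk hα).aemeasurable hφ.aestronglyMeasurable

end MFG

open MFG

theorem stmt_13_general
    {n : ℕ}
    (Ω : Set (Euc n))
    (m₁ m₂ : Measure (Euc n)) [IsFiniteMeasure m₁] [IsFiniteMeasure m₂]
    (hm₁s : m₁ ((closure Ω)ᶜ) = 0) (hm₂s : m₂ ((closure Ω)ᶜ) = 0)
    (a b : Euc n → Euc n) (ha : Measurable a) (hb : Measurable b)
    (hint : Integrable (fun x => ‖a x - b x‖) m₁) :
    dstar (pushfwd m₁ a) (pushfwd m₂ b) ≤
      (∫ x, ‖a x - b x‖ ∂m₁) +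
        ((m₁.toSignedMeasure - m₂.toSignedMeasure).totalVariation (closure Ω)).toReal := by
  rw [Measure.totalVariation_toSignedMeasure_sub_apply_eq_univ_of_compl hm₁s hm₂s,
    ← measureReal_def]
  refine Real.sSup_le ?_ (by positivity)
  rintro r ⟨φ, hφ, hφ_le, rfl⟩
  rw [integral_pushfwd hφ.continuous ha, integral_pushfwd hφ.continuous hb]
  exact integral_graph_sub_integral_graph_le hφ hφ_le ha hb hint

/-- `d*((I,a)#m₁, (I,b)#m₂) ≤ ∫|a−b| dm₁ + ‖m₁ − m₂‖_{TV}`. -/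
theorem stmt_13
    {n : ℕ} (hn : 1 ≤ n)
    (Ω : Set (Euc n)) (hΩo : IsOpen Ω) (hΩb : Bornology.IsBounded Ω) (hΩne : Ω.Nonempty)
    (m₁ m₂ : Measure (Euc n)) [IsFiniteMeasure m₁] [IsFiniteMeasure m₂]
    (hm₁s : m₁ ((closure Ω)ᶜ) = 0) (hm₂s : m₂ ((closure Ω)ᶜ) = 0)
    (a b : Euc n → Euc n) (ha : Measurable a) (hb : Measurable b)
    (hint : Integrable (fun x => ‖a x - b x‖) m₁) :
    dstar (pushfwd m₁ a) (pushfwd m₂ b) ≤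
      (∫ x, ‖a x - b x‖ ∂m₁) +
        ((m₁.toSignedMeasure - m₂.toSignedMeasure).totalVariation (closure Ω)).toReal :=
  stmt_13_general Ω m₁ m₂ hm₁s hm₂s a b ha hb hint
end
end

section
/- Let α ∈ (0,1), β ∈ (0,1), q₀ ∈ [1,∞), L₁ ∈ (0,1), and let ξ₁ : ℝ² → [0,∞) and ξ₂ : ℝ⁴ → [0,∞) be continuous. Assume D_pH satisfies: (i) |D_pH(t,x,p,(I,α₁)#ρ) − D_pH(t,x,p,(I,α₂)#ρ)| ≤ L₁‖α₁−α₂‖_{L^{q₀}(ρ)} for every subprobability measure ρ on cl(Ω) and bounded continuous α₁, α₂; (ii) |D_pH(t,x,p,(I,a)#ρ₁) − D_pH(t,x,p,(I,a)#ρ₂)| ≤ d*(ρ₁,ρ₂)^β ξ₁(|p|, ‖a‖_∞); (iii) |D_pH(t,x,p₁,μ₁) − D_pH(s,y,p₂,μ₂)| ≤ (|p₁−p₂|^β + |x−y|^β + |t−s|^{β/2}) ξ₂(|p₁|,|p₂|,Λ_∞(μ₁),Λ_∞(μ₂)). Let ũ with D_xũ ∈ C^{α/2,α}(Q;ℝⁿ),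 let m ∈ C^{α/2,α}(Q) with m ≥ 0 and ∫_Ω m(t,·) dx ≤ 1 for all t, and let h : Q → ℝⁿ be continuous and bounded satisfying h(t,x) = D_pH(t,x, D_xũ(t,x), (I, h(t,·))#(m(t,·)dx)) for all (t,x) ∈ Q. Then h ∈ C^{αβ/2,αβ}(Q;ℝⁿ), and ‖h‖_{C^{αβ/2,αβ}(Q)} ≤ C (‖D_xũ‖_{C^{α/2,α}(Q)}^β + ‖m‖_{C^{α/2,α}(Q)}^β + 1), where C depends only on L₁, α, β, Ω, and the suprema of ξ₁ and ξ₂ on the compact ranges determined by sup|D_xũ| and sup|h|. -/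
open Set MeasureTheory Filter
open scoped RealInnerProductSpace ENNReal Topology

noncomputable section

open MFG

/-! Fix two times `t, s` and let `S = sup_z |h(t,z) - h(s,z)|`. Through the fixed-point equation,
`h(t,x) - h(s,y)` splits into three differences of `D_pH`: by (iii) the change of `(t,x,p)` costs
the `β`-th power of the `α`-Hölder modulus of `D_xũ`; by (i) the change of control costs `L₁ S`,
since an `L^{q₀}` norm against a subprobability is at most a sup; by (ii) the change of state
marginal costs `d*(m(t)dx, m(s)dx)^β ≤ (|Ω| ‖m‖ |t - s|^{α/2})^β`. On the diagonal `x = y` this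
reads `S ≤ L₁ S + C |t - s|^{αβ/2}`, and `L₁ < 1` lets the term `L₁ S` be absorbed. -/

lemma rpow_le_max_one_rpow_sub_mul_rpow {a A γ δ : ℝ} (ha : 0 ≤ a) (haA : a ≤ A)
    (hγ : 0 < γ) (hγδ : γ ≤ δ) : a ^ δ ≤ max 1 A ^ (δ - γ) * a ^ γ := by
  rcases ha.eq_or_lt with rfl | ha
  · rw [Real.zero_rpow (hγ.trans_le hγδ).ne', Real.zero_rpow hγ.ne', mul_zero]
  · calc a ^ δ = a ^ (δ - γ) * a ^ γ := by rw [← Real.rpow_add ha, sub_add_cancel]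
      _ ≤ max 1 A ^ (δ - γ) * a ^ γ := by
        gcongr
        exact haA.trans (le_max_right _ _)

lemma exists_rpow_le_mul_rpow_of_le (A : ℝ) {γ δ : ℝ} (hγ : 0 < γ) (hγδ : γ ≤ δ) :
    ∃ C, 0 ≤ C ∧ ∀ a, 0 ≤ a → a ≤ A → a ^ δ ≤ C * a ^ γ :=
  ⟨_, by positivity, fun _ ha haA => rpow_le_max_one_rpow_sub_mul_rpow ha haA hγ hγδ⟩

lemma rpow_le_of_le_mul_add {r K a b β : ℝ} (hr : 0 ≤ r) (hK : 0 ≤ K) (ha : 0 ≤ a)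
    (hb : 0 ≤ b) (hβ : 0 ≤ β) (hβ1 : β ≤ 1) (h : r ≤ K * (a + b)) :
    r ^ β ≤ K ^ β * (a ^ β + b ^ β) :=
  calc r ^ β ≤ (K * (a + b)) ^ β := by gcongr
    _ = K ^ β * (a + b) ^ β := Real.mul_rpow hK (by positivity)
    _ ≤ K ^ β * (a ^ β + b ^ β) := by gcongr; exact Real.rpow_add_le_add_rpow ha hb hβ hβ1

lemma IsCompact.exists_nonneg_forall_le {X : Type*} [TopologicalSpace X] {K : Set X}
    (hK : IsCompact K) {f : X → ℝ} (hf : ContinuousOn f K) : ∃ M, 0 ≤ M ∧ ∀ x ∈ K, f x ≤ M := by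
  obtain ⟨C, hC⟩ := hK.exists_bound_of_continuousOn hf
  exact ⟨max C 0, le_max_right _ _, fun x hx =>
    (le_abs_self _).trans ((hC x hx).trans (le_max_left _ _))⟩

lemma continuousOn_of_dist_le_mul_rpow {X Y : Type*} [PseudoMetricSpace X] [PseudoMetricSpace Y]
    {f : X → Y} {s : Set X} {K γ : ℝ} (hγ : 0 < γ)
    (hf : ∀ x ∈ s, ∀ y ∈ s, dist (f x) (f y) ≤ K * dist x y ^ γ) : ContinuousOn f s := by
  intro x hx
  rw [ContinuousWithinAt, tendsto_iff_dist_tendsto_zero]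
  have hlim : Tendsto (fun y => K * dist y x ^ γ) (𝓝[s] x) (𝓝 0) := by
    have : Continuous fun y => K * dist y x ^ γ :=
      continuous_const.mul ((continuous_id.dist continuous_const).rpow_const fun _ => Or.inr hγ.le)
    simpa [Real.zero_rpow hγ.ne'] using (this.tendsto x).mono_left nhdsWithin_le_nhds
  exact squeeze_zero' (Eventually.of_forall fun _ => dist_nonneg)
    (eventually_nhdsWithin_of_forall fun y hy => hf y hy x hx) hlim

lemma norm_sub_le_div_one_sub_of_le_add_mul {X E : Type*} [SeminormedAddCommGroup E]
    {s : Set X} {f g : X → E} {e : X → X → ℝ} {a L : ℝ} (hL0 : 0 ≤ L) (hL1 : L < 1)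
    (hbdd : BddAbove ((fun z => ‖f z - g z‖) '' s))
    (he0 : ∀ x ∈ s, ∀ y ∈ s, 0 ≤ e x y) (hediag : ∀ z ∈ s, e z z = 0)
    (h : ∀ S, 0 ≤ S → (∀ z ∈ s, ‖f z - g z‖ ≤ S) →
      ∀ x ∈ s, ∀ y ∈ s, ‖f x - g y‖ ≤ a + e x y + L * S) :
    ∀ x ∈ s, ∀ y ∈ s, ‖f x - g y‖ ≤ (a + e x y) / (1 - L) := by
  intro x hx y hy
  set S := sSup ((fun z => ‖f z - g z‖) '' s)
  have hS0 : 0 ≤ S := Real.sSup_nonneg (by rintro _ ⟨z, -, rfl⟩; exact norm_nonneg _)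
  have hS : ∀ z ∈ s, ‖f z - g z‖ ≤ S := fun z hz => le_csSup hbdd ⟨z, hz, rfl⟩
  have hSa : S ≤ a + L * S := csSup_le ⟨_, x, hx, rfl⟩ <| by
    rintro _ ⟨z, hz, rfl⟩
    simpa [hediag z hz] using h S hS0 hS z hz z hz
  have hL : 0 < 1 - L := by linarith
  rw [le_div_iff₀ hL]
  nlinarith [h S hS0 hS x hx y hy, he0 x hx y hy]

namespace MFG

variable {n : ℕ}

lemma LqNormV_le {q : ℝ} (hq : 0 < q) {ρ : Measure (Euc n)} (hρ : ρ univ ≤ 1)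
    {s : Set (Euc n)} (hρs : ρ sᶜ = 0) {f : Euc n → Euc n} {M : ℝ} (hM : 0 ≤ M)
    (hf : ∀ x ∈ s, ‖f x‖ ≤ M) : LqNormV q ρ f ≤ M := by
  have : IsFiniteMeasure ρ := ⟨hρ.trans_lt ENNReal.one_lt_top⟩
  have hfM : ∀ᵐ x ∂ρ, ‖‖f x‖ ^ q‖ ≤ M ^ q := by
    filter_upwards [measure_eq_zero_iff_ae_notMem.1 hρs] with x hx
    rw [Real.norm_of_nonneg (by positivity)]
    exact Real.rpow_le_rpow (norm_nonneg _) (hf x (not_not.1 hx)) hq.le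
  have hint : ∫ x, ‖f x‖ ^ q ∂ρ ≤ M ^ q :=
    calc ∫ x, ‖f x‖ ^ q ∂ρ ≤ ‖∫ x, ‖f x‖ ^ q ∂ρ‖ := Real.le_norm_self _
      _ ≤ M ^ q * ρ.real univ := norm_integral_le_of_norm_le_const hfM
      _ ≤ M ^ q := mul_le_of_le_one_right (by positivity) (ENNReal.toReal_le_of_le_ofReal
          zero_le_one (by simpa using hρ))
  calc LqNormV q ρ f ≤ (M ^ q) ^ (1 / q) :=
        Real.rpow_le_rpow (integral_nonneg fun _ => by positivity) hint (by positivity)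
    _ = M := by rw [one_div, Real.rpow_rpow_inv hM hq.ne']

lemma densMeas_compl_closure (Ω : Set (Euc n)) (f : Euc n → ℝ) :
    densMeas Ω f (closure Ω)ᶜ = 0 :=
  withDensity_absolutelyContinuous _ _ <| by
    rw [Measure.restrict_apply isClosed_closure.measurableSet.compl,
      (disjoint_compl_left.mono_right subset_closure).inter_eq, measure_empty]

lemma integral_densMeas {Ω : Set (Euc n)} (hΩ : MeasurableSet Ω) {f : Euc n → ℝ}
    (hf : AEMeasurable f (volume.restrict Ω)) (hf0 : ∀ x ∈ Ω, 0 ≤ f x) (φ : Euc n → ℝ) :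
    ∫ x, φ x ∂densMeas Ω f = ∫ x in Ω, f x * φ x := by
  rw [densMeas, integral_withDensity_eq_integral_toReal_smul₀ hf.ennreal_ofReal
    (Eventually.of_forall fun _ => ENNReal.ofReal_lt_top)]
  refine setIntegral_congr_fun hΩ fun x hx => ?_
  simp [ENNReal.toReal_ofReal (hf0 x hx)]

lemma densMeas_univ_le_one {Ω : Set (Euc n)} (hΩ : MeasurableSet Ω) {f : Euc n → ℝ}
    (hf : IntegrableOn f Ω) (hf0 : ∀ x ∈ Ω, 0 ≤ f x) (h1 : ∫ x in Ω, f x ≤ 1) :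
    densMeas Ω f univ ≤ 1 := by
  rw [densMeas, withDensity_apply _ MeasurableSet.univ, Measure.restrict_univ,
    ← ofReal_integral_eq_lintegral_ofReal hf (ae_restrict_of_forall_mem hΩ hf0)]
  exact ENNReal.ofReal_le_one.2 h1

lemma dstarX_nonneg (μ ν : Measure (Euc n)) : 0 ≤ dstarX μ ν := by
  by_cases hbdd : BddAbove {r : ℝ | ∃ φ : Euc n → ℝ, LipschitzWith 1 φ ∧ (∀ z, |φ z| ≤ 1) ∧
      r = (∫ z, φ z ∂μ) - ∫ z, φ z ∂ν}
  · exact le_csSup hbdd ⟨0, (LipschitzWith.const 0).weaken zero_le_one, by simp, by simp⟩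
  · exact (Real.sSup_of_not_bddAbove hbdd).ge

lemma dstarX_densMeas_le {Ω : Set (Euc n)} (hΩ : MeasurableSet Ω) (hΩfin : volume Ω ≠ ∞)
    {f g : Euc n → ℝ} (hf : IntegrableOn f Ω) (hg : IntegrableOn g Ω)
    (hf0 : ∀ x ∈ Ω, 0 ≤ f x) (hg0 : ∀ x ∈ Ω, 0 ≤ g x) {δ : ℝ} (hδ : 0 ≤ δ)
    (hfg : ∀ x ∈ Ω, |f x - g x| ≤ δ) :
    dstarX (densMeas Ω f) (densMeas Ω g) ≤ volume.real Ω * δ := by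
  have : IsFiniteMeasure (volume.restrict Ω) := isFiniteMeasure_restrict.2 hΩfin
  refine Real.sSup_le ?_ (by positivity)
  rintro _ ⟨φ, hφ, hφ1, rfl⟩
  have hφm : AEStronglyMeasurable φ (volume.restrict Ω) :=
    hφ.continuous.aestronglyMeasurable
  have hφb : ∀ᵐ x ∂volume.restrict Ω, ‖φ x‖ ≤ 1 := Eventually.of_forall hφ1
  rw [integral_densMeas hΩ hf.aemeasurable hf0, integral_densMeas hΩ hg.aemeasurable hg0,
    ← integral_sub (hf.mul_bdd hφm hφb) (hg.mul_bdd hφm hφb)]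
  have hbound : ∀ᵐ x ∂volume.restrict Ω, ‖f x * φ x - g x * φ x‖ ≤ δ := by
    filter_upwards [ae_restrict_mem hΩ] with x hx
    rw [← sub_mul, norm_mul, Real.norm_eq_abs, Real.norm_eq_abs]
    exact (mul_le_mul (hfg x hx) (hφ1 x) (abs_nonneg _) hδ).trans_eq (mul_one δ)
  calc ∫ x in Ω, f x * φ x - g x * φ x ≤ ‖∫ x in Ω, f x * φ x - g x * φ x‖ := Real.le_norm_self _
    _ ≤ δ * (volume.restrict Ω).real univ := norm_integral_le_of_norm_le_const hbound
    _ = volume.real Ω * δ := by rw [measureReal_restrict_apply_univ, mul_comm]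

lemma pushfwd_univ_le (ρ : Measure (Euc n)) (a : Euc n → Euc n) : pushfwd ρ a univ ≤ ρ univ := by
  by_cases ha : AEMeasurable (fun x => (x, a x)) ρ
  · rw [pushfwd, Measure.map_apply_of_aemeasurable ha MeasurableSet.univ, preimage_univ]
  · simp [pushfwd, Measure.map_of_not_aemeasurable ha]

lemma LambdaInf_pushfwd_mem_Icc {ρ : Measure (Euc n)} {s : Set (Euc n)} (hρs : ρ sᶜ = 0)
    {a : Euc n → Euc n} {B : ℝ} (hB : 0 ≤ B) (ha : ∀ x ∈ s, ‖a x‖ ≤ B) :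
    LambdaInf (pushfwd ρ a) ∈ Icc 0 B := by
  have htail : pushfwd ρ a {z : Euc n × Euc n | B < ‖z.2‖} = 0 := by
    by_cases hm : AEMeasurable (fun x => (x, a x)) ρ
    · rw [pushfwd, Measure.map_apply_of_aemeasurable hm
        (measurableSet_lt measurable_const measurable_snd.norm)]
      exact measure_mono_null (fun x hx hxs => (ha x hxs).not_gt hx) hρs
    · simp [pushfwd, Measure.map_of_not_aemeasurable hm]
  exact ⟨Real.sInf_nonneg fun _ hr => hr.1, csInf_le ⟨0, fun _ hr => hr.1⟩ ⟨hB, htail⟩⟩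

lemma supX_norm_mem_Icc {Ω : Set (Euc n)} {a : Euc n → Euc n} {B : ℝ} (hB : 0 ≤ B)
    (ha : ∀ x ∈ closure Ω, ‖a x‖ ≤ B) : supX Ω (fun x => ‖a x‖) ∈ Icc 0 B :=
  ⟨Real.sSup_nonneg (by rintro _ ⟨x, -, rfl⟩; exact norm_nonneg _),
    Real.sSup_le (by rintro _ ⟨x, hx, rfl⟩; exact ha x hx) hB⟩

def ContractsInControl (Ω : Set (Euc n)) (q₀ L₁ : ℝ)
    (DpH : ℝ → Euc n → Euc n → Measure (Euc n × Euc n) → Euc n) : Prop :=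
  ∀ (s : ℝ) (x pp : Euc n) (ρ : Measure (Euc n)),
    ρ Set.univ ≤ 1 → ρ ((closure Ω)ᶜ) = 0 →
    ∀ α₁ α₂ : Euc n → Euc n,
      ContinuousOn α₁ (closure Ω) → ContinuousOn α₂ (closure Ω) →
      (∃ C, ∀ y ∈ closure Ω, ‖α₁ y‖ ≤ C) → (∃ C, ∀ y ∈ closure Ω, ‖α₂ y‖ ≤ C) →
      ‖DpH s x pp (pushfwd ρ α₁) - DpH s x pp (pushfwd ρ α₂)‖ ≤
        L₁ * LqNormV q₀ ρ (fun y => α₁ y - α₂ y)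

def HolderInMarginal (Ω : Set (Euc n)) (βc : ℝ) (ξ₁ : ℝ → ℝ → ℝ)
    (DpH : ℝ → Euc n → Euc n → Measure (Euc n × Euc n) → Euc n) : Prop :=
  ∀ (s : ℝ) (x pp : Euc n) (a : Euc n → Euc n) (ρ₁ ρ₂ : Measure (Euc n)),
    ρ₁ Set.univ ≤ 1 → ρ₂ Set.univ ≤ 1 →
    ρ₁ ((closure Ω)ᶜ) = 0 → ρ₂ ((closure Ω)ᶜ) = 0 →
    ContinuousOn a (closure Ω) → (∃ C, ∀ y ∈ closure Ω, ‖a y‖ ≤ C) →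
    ‖DpH s x pp (pushfwd ρ₁ a) - DpH s x pp (pushfwd ρ₂ a)‖ ≤
      dstarX ρ₁ ρ₂ ^ βc * ξ₁ ‖pp‖ (supX Ω (fun y => ‖a y‖))

def HolderInState (βc : ℝ) (ξ₂ : ℝ → ℝ → ℝ → ℝ → ℝ)
    (DpH : ℝ → Euc n → Euc n → Measure (Euc n × Euc n) → Euc n) : Prop :=
  ∀ (t s : ℝ) (x y p₁ p₂ : Euc n) (μ₁ μ₂ : Measure (Euc n × Euc n)),
    μ₁ Set.univ ≤ 1 → μ₂ Set.univ ≤ 1 →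
    ‖DpH t x p₁ μ₁ - DpH s y p₂ μ₂‖ ≤
      (‖p₁ - p₂‖ ^ βc + ‖x - y‖ ^ βc + |t - s| ^ (βc / 2)) *
        ξ₂ ‖p₁‖ ‖p₂‖ (LambdaInf μ₁) (LambdaInf μ₂)

section

variable {Ω : Set (Euc n)} {DpH : ℝ → Euc n → Euc n → Measure (Euc n × Euc n) → Euc n}
  {βc Bu Bh : ℝ}

lemma norm_sub_le_of_contractsInControl {q₀ L₁ : ℝ} (hLip : ContractsInControl Ω q₀ L₁ DpH)
    (hq₀ : 0 < q₀) (hL₁ : 0 ≤ L₁) {s : ℝ} {x p : Euc n} {ρ : Measure (Euc n)}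
    (hρ : ρ univ ≤ 1) (hρΩ : ρ (closure Ω)ᶜ = 0) {a₁ a₂ : Euc n → Euc n}
    (ha₁ : ContinuousOn a₁ (closure Ω)) (ha₂ : ContinuousOn a₂ (closure Ω))
    (ha₁b : ∃ C, ∀ y ∈ closure Ω, ‖a₁ y‖ ≤ C) (ha₂b : ∃ C, ∀ y ∈ closure Ω, ‖a₂ y‖ ≤ C)
    {S : ℝ} (hS0 : 0 ≤ S) (hS : ∀ y ∈ closure Ω, ‖a₁ y - a₂ y‖ ≤ S) :
    ‖DpH s x p (pushfwd ρ a₁) - DpH s x p (pushfwd ρ a₂)‖ ≤ L₁ * S :=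
  (hLip s x p ρ hρ hρΩ a₁ a₂ ha₁ ha₂ ha₁b ha₂b).trans <|
    mul_le_mul_of_nonneg_left (LqNormV_le hq₀ hρ hρΩ hS0 hS) hL₁

lemma norm_sub_le_of_holderInMarginal {ξ₁ : ℝ → ℝ → ℝ} {M₁ : ℝ}
    (hρHold : HolderInMarginal Ω βc ξ₁ DpH)
    (hM₁ : ∀ z ∈ Icc 0 Bu ×ˢ Icc 0 Bh, ξ₁ z.1 z.2 ≤ M₁) (hBh : 0 ≤ Bh)
    {s : ℝ} {x p : Euc n} (hp : ‖p‖ ≤ Bu) {ρ₁ ρ₂ : Measure (Euc n)}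
    (hρ₁ : ρ₁ univ ≤ 1) (hρ₂ : ρ₂ univ ≤ 1) (hρ₁Ω : ρ₁ (closure Ω)ᶜ = 0)
    (hρ₂Ω : ρ₂ (closure Ω)ᶜ = 0) {a : Euc n → Euc n} (ha : ContinuousOn a (closure Ω))
    (hab : ∀ y ∈ closure Ω, ‖a y‖ ≤ Bh) :
    ‖DpH s x p (pushfwd ρ₁ a) - DpH s x p (pushfwd ρ₂ a)‖ ≤ dstarX ρ₁ ρ₂ ^ βc * M₁ :=
  (hρHold s x p a ρ₁ ρ₂ hρ₁ hρ₂ hρ₁Ω hρ₂Ω ha ⟨Bh, hab⟩).trans <| by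
    have := dstarX_nonneg ρ₁ ρ₂
    gcongr
    exact hM₁ (_, _) ⟨⟨norm_nonneg _, hp⟩, supX_norm_mem_Icc hBh hab⟩

lemma norm_sub_le_of_holderInState {ξ₂ : ℝ → ℝ → ℝ → ℝ → ℝ} {M₂ : ℝ}
    (hHold : HolderInState βc ξ₂ DpH)
    (hM₂ : ∀ z ∈ Icc 0 Bu ×ˢ Icc 0 Bu ×ˢ Icc 0 Bh ×ˢ Icc 0 Bh,
      ξ₂ z.1 z.2.1 z.2.2.1 z.2.2.2 ≤ M₂)
    {t s : ℝ} {x y p₁ p₂ : Euc n} (hp₁ : ‖p₁‖ ≤ Bu) (hp₂ : ‖p₂‖ ≤ Bu)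
    {μ₁ μ₂ : Measure (Euc n × Euc n)} (hμ₁ : μ₁ univ ≤ 1) (hμ₂ : μ₂ univ ≤ 1)
    (hΛ₁ : LambdaInf μ₁ ∈ Icc 0 Bh) (hΛ₂ : LambdaInf μ₂ ∈ Icc 0 Bh) :
    ‖DpH t x p₁ μ₁ - DpH s y p₂ μ₂‖ ≤
      (‖p₁ - p₂‖ ^ βc + ‖x - y‖ ^ βc + |t - s| ^ (βc / 2)) * M₂ :=
  (hHold t s x y p₁ p₂ μ₁ μ₂ hμ₁ hμ₂).trans <| by
    gcongr
    exact hM₂ (_, _, _, _) ⟨⟨norm_nonneg _, hp₁⟩, ⟨norm_nonneg _, hp₂⟩, hΛ₁, hΛ₂⟩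

end

structure DriftFixedPoint (T : ℝ) (Ω : Set (Euc n)) (αc Ku Km Bu Bh : ℝ)
    (DpH : ℝ → Euc n → Euc n → Measure (Euc n × Euc n) → Euc n)
    (Du : ℝ → Euc n → Euc n) (m : ℝ → Euc n → ℝ) (h : ℝ → Euc n → Euc n) : Prop where
  norm_Du_le : ∀ t ∈ Icc (0:ℝ) T, ∀ x ∈ closure Ω, ‖Du t x‖ ≤ Bu
  norm_Du_sub_le : ∀ t ∈ Icc (0:ℝ) T, ∀ s ∈ Icc (0:ℝ) T, ∀ x ∈ closure Ω, ∀ y ∈ closure Ω,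
    ‖Du t x - Du s y‖ ≤ Ku * (|t - s| ^ (αc / 2) + ‖x - y‖ ^ αc)
  m_nonneg : ∀ t ∈ Icc (0:ℝ) T, ∀ x ∈ closure Ω, 0 ≤ m t x
  abs_m_sub_le : ∀ t ∈ Icc (0:ℝ) T, ∀ s ∈ Icc (0:ℝ) T, ∀ x ∈ closure Ω, ∀ y ∈ closure Ω,
    |m t x - m s y| ≤ Km * (|t - s| ^ (αc / 2) + ‖x - y‖ ^ αc)
  integral_m_le_one : ∀ t ∈ Icc (0:ℝ) T, (∫ x in Ω, m t x) ≤ 1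
  continuousOn_h : ∀ t ∈ Icc (0:ℝ) T, ContinuousOn (h t) (closure Ω)
  norm_h_le : ∀ t ∈ Icc (0:ℝ) T, ∀ x ∈ closure Ω, ‖h t x‖ ≤ Bh
  h_eq : ∀ t ∈ Icc (0:ℝ) T, ∀ x ∈ closure Ω,
    h t x = DpH t x (Du t x) (pushfwd (densMeas Ω (m t)) (h t))

namespace DriftFixedPoint

variable {T αc βc q₀ L₁ Ku Km Bu Bh M₁ M₂ : ℝ} {Ω : Set (Euc n)}
  {DpH : ℝ → Euc n → Euc n → Measure (Euc n × Euc n) → Euc n} {ξ₁ : ℝ → ℝ → ℝ}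
  {ξ₂ : ℝ → ℝ → ℝ → ℝ → ℝ} {Du : ℝ → Euc n → Euc n} {m : ℝ → Euc n → ℝ}
  {h : ℝ → Euc n → Euc n} {t s : ℝ}

lemma integrableOn_m (hd : DriftFixedPoint T Ω αc Ku Km Bu Bh DpH Du m h)
    (hΩb : Bornology.IsBounded Ω) (hα : 0 < αc) (ht : t ∈ Icc 0 T) : IntegrableOn (m t) Ω := by
  have hmc : ContinuousOn (m t) (closure Ω) :=
    continuousOn_of_dist_le_mul_rpow hα fun x hx y hy => by
      simpa [Real.dist_eq, dist_eq_norm, Real.zero_rpow (half_pos hα).ne'] using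
        hd.abs_m_sub_le t ht t ht x hx y hy
  exact (hmc.integrableOn_compact hΩb.isCompact_closure).mono_set subset_closure

lemma densMeas_univ_le_one (hd : DriftFixedPoint T Ω αc Ku Km Bu Bh DpH Du m h)
    (hΩ : MeasurableSet Ω) (hΩb : Bornology.IsBounded Ω) (hα : 0 < αc) (ht : t ∈ Icc 0 T) :
    densMeas Ω (m t) univ ≤ 1 :=
  MFG.densMeas_univ_le_one hΩ (hd.integrableOn_m hΩb hα ht)
    (fun x hx => hd.m_nonneg t ht x (subset_closure hx)) (hd.integral_m_le_one t ht)

lemma dstarX_densMeas_rpow_le (hd : DriftFixedPoint T Ω αc Ku Km Bu Bh DpH Du m h)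
    (hΩ : MeasurableSet Ω) (hΩb : Bornology.IsBounded Ω) (hα : 0 < αc) (hβ : 0 ≤ βc) (hKm : 0 ≤ Km)
    (ht : t ∈ Icc 0 T) (hs : s ∈ Icc 0 T) :
    dstarX (densMeas Ω (m t)) (densMeas Ω (m s)) ^ βc ≤
      volume.real Ω ^ βc * Km ^ βc * |t - s| ^ (αc * βc / 2) := by
  have hdist := dstarX_densMeas_le hΩ hΩb.measure_lt_top.ne
    (hd.integrableOn_m hΩb hα ht) (hd.integrableOn_m hΩb hα hs)
    (fun x hx => hd.m_nonneg t ht x (subset_closure hx))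
    (fun x hx => hd.m_nonneg s hs x (subset_closure hx))
    (by positivity : 0 ≤ Km * |t - s| ^ (αc / 2)) fun x hx => by
      simpa [Real.zero_rpow hα.ne'] using
        hd.abs_m_sub_le t ht s hs x (subset_closure hx) x (subset_closure hx)
  calc dstarX (densMeas Ω (m t)) (densMeas Ω (m s)) ^ βc
      ≤ (volume.real Ω * (Km * |t - s| ^ (αc / 2))) ^ βc := by
        gcongr; exact dstarX_nonneg _ _
    _ = volume.real Ω ^ βc * Km ^ βc * (|t - s| ^ (αc / 2)) ^ βc := by
        rw [Real.mul_rpow (by positivity) (by positivity), Real.mul_rpow hKm (by positivity),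
          mul_assoc]
    _ = _ := by rw [← Real.rpow_mul (abs_nonneg _)]; ring_nf

lemma norm_sub_le_three_terms (hd : DriftFixedPoint T Ω αc Ku Km Bu Bh DpH Du m h)
    (hΩ : MeasurableSet Ω) (hΩb : Bornology.IsBounded Ω) (hα : 0 < αc) (hq₀ : 0 < q₀)
    (hL₁ : 0 ≤ L₁) (hLip : ContractsInControl Ω q₀ L₁ DpH)
    (hρHold : HolderInMarginal Ω βc ξ₁ DpH) (hHold : HolderInState βc ξ₂ DpH)
    (hM₁ : ∀ z ∈ Icc 0 Bu ×ˢ Icc 0 Bh, ξ₁ z.1 z.2 ≤ M₁)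
    (hM₂ : ∀ z ∈ Icc 0 Bu ×ˢ Icc 0 Bu ×ˢ Icc 0 Bh ×ˢ Icc 0 Bh,
      ξ₂ z.1 z.2.1 z.2.2.1 z.2.2.2 ≤ M₂)
    (hBh : 0 ≤ Bh) (ht : t ∈ Icc 0 T) (hs : s ∈ Icc 0 T) {S : ℝ} (hS0 : 0 ≤ S)
    (hS : ∀ z ∈ closure Ω, ‖h t z - h s z‖ ≤ S) {x y : Euc n} (hx : x ∈ closure Ω)
    (hy : y ∈ closure Ω) :
    ‖h t x - h s y‖ ≤ (‖Du t x - Du s y‖ ^ βc + ‖x - y‖ ^ βc + |t - s| ^ (βc / 2)) * M₂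
      + L₁ * S + dstarX (densMeas Ω (m t)) (densMeas Ω (m s)) ^ βc * M₁ := by
  set ρ : ℝ → Measure (Euc n) := fun t => densMeas Ω (m t)
  have hρt := hd.densMeas_univ_le_one hΩ hΩb hα ht
  have hρs := hd.densMeas_univ_le_one hΩ hΩb hα hs
  set μ := pushfwd (ρ t) (h t)
  have hμ : μ univ ≤ 1 := (pushfwd_univ_le _ _).trans hρt
  have hΛ : LambdaInf μ ∈ Icc 0 Bh :=
    LambdaInf_pushfwd_mem_Icc (densMeas_compl_closure Ω (m t)) hBh (hd.norm_h_le t ht)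
  calc ‖h t x - h s y‖
      ≤ ‖DpH t x (Du t x) μ - DpH s y (Du s y) μ‖
        + ‖DpH s y (Du s y) μ - DpH s y (Du s y) (pushfwd (ρ t) (h s))‖
        + ‖DpH s y (Du s y) (pushfwd (ρ t) (h s)) - DpH s y (Du s y) (pushfwd (ρ s) (h s))‖ := by
        rw [hd.h_eq t ht x hx, hd.h_eq s hs y hy]
        simpa only [dist_eq_norm] using dist_triangle4 (DpH t x (Du t x) μ)
          (DpH s y (Du s y) μ) (DpH s y (Du s y) (pushfwd (ρ t) (h s)))
          (DpH s y (Du s y) (pushfwd (ρ s) (h s)))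
    _ ≤ _ := by
        gcongr
        · exact norm_sub_le_of_holderInState hHold hM₂ (hd.norm_Du_le t ht x hx)
            (hd.norm_Du_le s hs y hy) hμ hμ hΛ hΛ
        · exact norm_sub_le_of_contractsInControl hLip hq₀ hL₁ hρt
            (densMeas_compl_closure Ω (m t)) (hd.continuousOn_h t ht) (hd.continuousOn_h s hs)
            ⟨Bh, hd.norm_h_le t ht⟩ ⟨Bh, hd.norm_h_le s hs⟩ hS0 hS
        · exact norm_sub_le_of_holderInMarginal hρHold hM₁ hBh (hd.norm_Du_le s hs y hy) hρt hρs
            (densMeas_compl_closure Ω (m t)) (densMeas_compl_closure Ω (m s))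
            (hd.continuousOn_h s hs) (hd.norm_h_le s hs)

lemma norm_sub_le_holder (hd : DriftFixedPoint T Ω αc Ku Km Bu Bh DpH Du m h)
    (hΩ : MeasurableSet Ω) (hΩb : Bornology.IsBounded Ω) (hα : 0 < αc) (hβ : 0 < βc) (hβ1 : βc ≤ 1)
    (hq₀ : 0 < q₀) (hL₁ : 0 ≤ L₁) (hLip : ContractsInControl Ω q₀ L₁ DpH)
    (hρHold : HolderInMarginal Ω βc ξ₁ DpH) (hHold : HolderInState βc ξ₂ DpH)
    (hM₁ : ∀ z ∈ Icc 0 Bu ×ˢ Icc 0 Bh, ξ₁ z.1 z.2 ≤ M₁)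
    (hM₂ : ∀ z ∈ Icc 0 Bu ×ˢ Icc 0 Bu ×ˢ Icc 0 Bh ×ˢ Icc 0 Bh,
      ξ₂ z.1 z.2.1 z.2.2.1 z.2.2.2 ≤ M₂)
    (hM₁0 : 0 ≤ M₁) (hM₂0 : 0 ≤ M₂) (hBh : 0 ≤ Bh) (hKu : 0 ≤ Ku) (hKm : 0 ≤ Km) {CΩ CT : ℝ}
    (hCΩ : ∀ r, 0 ≤ r → r ≤ Metric.diam (closure Ω) → r ^ βc ≤ CΩ * r ^ (αc * βc))
    (hCT : ∀ r, 0 ≤ r → r ≤ T → r ^ (βc / 2) ≤ CT * r ^ (αc * βc / 2))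
    (ht : t ∈ Icc 0 T) (hs : s ∈ Icc 0 T) {S : ℝ} (hS0 : 0 ≤ S)
    (hS : ∀ z ∈ closure Ω, ‖h t z - h s z‖ ≤ S) {x y : Euc n} (hx : x ∈ closure Ω)
    (hy : y ∈ closure Ω) :
    ‖h t x - h s y‖ ≤
      ((Ku ^ βc + CT) * M₂ + volume.real Ω ^ βc * Km ^ βc * M₁) * |t - s| ^ (αc * βc / 2)
        + (Ku ^ βc + CΩ) * M₂ * ‖x - y‖ ^ (αc * βc) + L₁ * S := by
  have hDu : ‖Du t x - Du s y‖ ^ βc ≤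
      Ku ^ βc * (|t - s| ^ (αc * βc / 2) + ‖x - y‖ ^ (αc * βc)) := by
    rw [show αc * βc / 2 = αc / 2 * βc by ring, Real.rpow_mul (abs_nonneg _),
      Real.rpow_mul (norm_nonneg _)]
    exact rpow_le_of_le_mul_add (norm_nonneg _) hKu (by positivity) (by positivity) hβ.le hβ1
      (hd.norm_Du_sub_le t ht s hs x hx y hy)
  have hxy := hCΩ ‖x - y‖ (norm_nonneg _)
    (dist_eq_norm x y ▸ Metric.dist_le_diam_of_mem hΩb.closure hx hy)
  have hts := hCT |t - s| (abs_nonneg _)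
    (abs_sub_le_iff.2 ⟨by linarith [ht.2, hs.1], by linarith [hs.2, ht.1]⟩)
  calc ‖h t x - h s y‖
      ≤ (‖Du t x - Du s y‖ ^ βc + ‖x - y‖ ^ βc + |t - s| ^ (βc / 2)) * M₂
        + L₁ * S + dstarX (densMeas Ω (m t)) (densMeas Ω (m s)) ^ βc * M₁ :=
        hd.norm_sub_le_three_terms hΩ hΩb hα hq₀ hL₁ hLip hρHold hHold hM₁ hM₂ hBh ht hs hS0 hS
          hx hy
    _ ≤ (Ku ^ βc * (|t - s| ^ (αc * βc / 2) + ‖x - y‖ ^ (αc * βc)) + CΩ * ‖x - y‖ ^ (αc * βc)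
          + CT * |t - s| ^ (αc * βc / 2)) * M₂ + L₁ * S
        + volume.real Ω ^ βc * Km ^ βc * |t - s| ^ (αc * βc / 2) * M₁ := by
        gcongr
        exact hd.dstarX_densMeas_rpow_le hΩ hΩb hα hβ.le hKm ht hs
    _ = _ := by ring

lemma norm_sub_le_holder_div (hd : DriftFixedPoint T Ω αc Ku Km Bu Bh DpH Du m h)
    (hΩ : MeasurableSet Ω) (hΩb : Bornology.IsBounded Ω) (hα : 0 < αc) (hβ : 0 < βc) (hβ1 : βc ≤ 1)
    (hq₀ : 0 < q₀) (hL₁ : 0 ≤ L₁) (hL₁1 : L₁ < 1) (hLip : ContractsInControl Ω q₀ L₁ DpH)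
    (hρHold : HolderInMarginal Ω βc ξ₁ DpH) (hHold : HolderInState βc ξ₂ DpH)
    (hM₁ : ∀ z ∈ Icc 0 Bu ×ˢ Icc 0 Bh, ξ₁ z.1 z.2 ≤ M₁)
    (hM₂ : ∀ z ∈ Icc 0 Bu ×ˢ Icc 0 Bu ×ˢ Icc 0 Bh ×ˢ Icc 0 Bh,
      ξ₂ z.1 z.2.1 z.2.2.1 z.2.2.2 ≤ M₂)
    (hM₁0 : 0 ≤ M₁) (hM₂0 : 0 ≤ M₂) (hBh : 0 ≤ Bh) (hKu : 0 ≤ Ku) (hKm : 0 ≤ Km) {CΩ CT : ℝ}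
    (hCΩ0 : 0 ≤ CΩ) (hCT0 : 0 ≤ CT)
    (hCΩ : ∀ r, 0 ≤ r → r ≤ Metric.diam (closure Ω) → r ^ βc ≤ CΩ * r ^ (αc * βc))
    (hCT : ∀ r, 0 ≤ r → r ≤ T → r ^ (βc / 2) ≤ CT * r ^ (αc * βc / 2))
    (ht : t ∈ Icc 0 T) (hs : s ∈ Icc 0 T) {x y : Euc n} (hx : x ∈ closure Ω)
    (hy : y ∈ closure Ω) :
    ‖h t x - h s y‖ ≤ ((1 + CT + CΩ) * M₂ + volume.real Ω ^ βc * M₁) *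
      (Ku ^ βc + Km ^ βc + 1) * (|t - s| ^ (αc * βc / 2) + ‖x - y‖ ^ (αc * βc)) / (1 - L₁) := by
  have hbdd : BddAbove ((fun z => ‖h t z - h s z‖) '' closure Ω) :=
    ⟨Bh + Bh, by
      rintro _ ⟨z, hz, rfl⟩
      exact (norm_sub_le _ _).trans (add_le_add (hd.norm_h_le t ht z hz) (hd.norm_h_le s hs z hz))⟩
  have habs := norm_sub_le_div_one_sub_of_le_add_mul hL₁ hL₁1 hbdd
    (fun x _ y _ => by positivity) (fun z _ => by simp [Real.zero_rpow (mul_pos hα hβ).ne'])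
    fun S hS0 hS x hx y hy => hd.norm_sub_le_holder hΩ hΩb hα hβ hβ1 hq₀ hL₁ hLip hρHold hHold
      hM₁ hM₂ hM₁0 hM₂0 hBh hKu hKm hCΩ hCT ht hs hS0 hS hx hy
  have hu : Ku ^ βc ≤ Ku ^ βc + Km ^ βc + 1 := by linarith [Real.rpow_nonneg hKm βc]
  have hv : Km ^ βc ≤ Ku ^ βc + Km ^ βc + 1 := by linarith [Real.rpow_nonneg hKu βc]
  have hP : 1 ≤ Ku ^ βc + Km ^ βc + 1 := by
    linarith [Real.rpow_nonneg hKu βc, Real.rpow_nonneg hKm βc]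
  set P := Ku ^ βc + Km ^ βc + 1
  have hV : 0 ≤ volume.real Ω ^ βc := by positivity
  have hA : (Ku ^ βc + CT) * M₂ + volume.real Ω ^ βc * Km ^ βc * M₁ ≤
      ((1 + CT + CΩ) * M₂ + volume.real Ω ^ βc * M₁) * P := by
    nlinarith [mul_le_mul_of_nonneg_right hu hM₂0,
      mul_le_mul_of_nonneg_left hP (mul_nonneg hCT0 hM₂0),
      mul_le_mul_of_nonneg_left hv (mul_nonneg hV hM₁0),
      mul_nonneg (mul_nonneg hCΩ0 hM₂0) (zero_le_one.trans hP)]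
  have hB : (Ku ^ βc + CΩ) * M₂ ≤ ((1 + CT + CΩ) * M₂ + volume.real Ω ^ βc * M₁) * P := by
    nlinarith [mul_le_mul_of_nonneg_right hu hM₂0,
      mul_le_mul_of_nonneg_left hP (mul_nonneg hCΩ0 hM₂0),
      mul_nonneg (mul_nonneg hCT0 hM₂0) (zero_le_one.trans hP),
      mul_nonneg (mul_nonneg hV hM₁0) (zero_le_one.trans hP)]
  refine (habs x hx y hy).trans ?_
  rw [mul_add]
  gcongr

end DriftFixedPoint

lemma exists_holder_bound_of_driftFixedPoint {Ω : Set (Euc n)} (hΩ : MeasurableSet Ω)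
    (hΩb : Bornology.IsBounded Ω) {T αc βc q₀ L₁ Bu Bh : ℝ}
    {DpH : ℝ → Euc n → Euc n → Measure (Euc n × Euc n) → Euc n} {ξ₁ : ℝ → ℝ → ℝ}
    {ξ₂ : ℝ → ℝ → ℝ → ℝ → ℝ} (hα : 0 < αc) (hα1 : αc ≤ 1) (hβ : 0 < βc) (hβ1 : βc ≤ 1)
    (hq₀ : 0 < q₀) (hL₁ : 0 ≤ L₁) (hL₁1 : L₁ < 1) (hLip : ContractsInControl Ω q₀ L₁ DpH)
    (hρHold : HolderInMarginal Ω βc ξ₁ DpH) (hHold : HolderInState βc ξ₂ DpH)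
    (hξ₁ : Continuous fun z : ℝ × ℝ => ξ₁ z.1 z.2)
    (hξ₂ : Continuous fun z : ℝ × ℝ × ℝ × ℝ => ξ₂ z.1 z.2.1 z.2.2.1 z.2.2.2) (hBh : 0 ≤ Bh) :
    ∃ K, 0 ≤ K ∧ ∀ ⦃Ku Km : ℝ⦄ ⦃Du : ℝ → Euc n → Euc n⦄ ⦃m : ℝ → Euc n → ℝ⦄
      ⦃h : ℝ → Euc n → Euc n⦄, 0 ≤ Ku → 0 ≤ Km → DriftFixedPoint T Ω αc Ku Km Bu Bh DpH Du m h →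
      ∀ t ∈ Icc 0 T, ∀ s ∈ Icc 0 T, ∀ x ∈ closure Ω, ∀ y ∈ closure Ω,
        ‖h t x - h s y‖ ≤ K * (Ku ^ βc + Km ^ βc + 1) *
          (|t - s| ^ (αc * βc / 2) + ‖x - y‖ ^ (αc * βc)) / (1 - L₁) := by
  have hαβ : αc * βc ≤ βc := mul_le_of_le_one_left hβ.le hα1
  obtain ⟨M₁, hM₁0, hM₁⟩ : ∃ M, 0 ≤ M ∧ ∀ z ∈ Icc 0 Bu ×ˢ Icc 0 Bh, ξ₁ z.1 z.2 ≤ M :=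
    (isCompact_Icc.prod isCompact_Icc).exists_nonneg_forall_le hξ₁.continuousOn
  obtain ⟨M₂, hM₂0, hM₂⟩ : ∃ M, 0 ≤ M ∧ ∀ z ∈ Icc 0 Bu ×ˢ Icc 0 Bu ×ˢ Icc 0 Bh ×ˢ Icc 0 Bh,
      ξ₂ z.1 z.2.1 z.2.2.1 z.2.2.2 ≤ M :=
    (isCompact_Icc.prod (isCompact_Icc.prod (isCompact_Icc.prod isCompact_Icc))
      ).exists_nonneg_forall_le hξ₂.continuousOn
  obtain ⟨CΩ, hCΩ0, hCΩ⟩ :=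
    exists_rpow_le_mul_rpow_of_le (Metric.diam (closure Ω)) (mul_pos hα hβ) hαβ
  obtain ⟨CT, hCT0, hCT⟩ := exists_rpow_le_mul_rpow_of_le T (half_pos (mul_pos hα hβ))
    (div_le_div_of_nonneg_right hαβ zero_le_two)
  exact ⟨(1 + CT + CΩ) * M₂ + volume.real Ω ^ βc * M₁,
    add_nonneg (mul_nonneg (by positivity) hM₂0) (mul_nonneg (by positivity) hM₁0),
    fun Ku Km Du m h hKu hKm hd t ht s hs x hx y hy =>
      hd.norm_sub_le_holder_div hΩ hΩb hα hβ hβ1 hq₀ hL₁ hL₁1 hLip hρHold hHold hM₁ hM₂ hM₁0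
        hM₂0 hBh hKu hKm hCΩ0 hCT0 hCΩ hCT ht hs hx hy⟩

end MFG

theorem stmt_14_general
    {n : ℕ} (T : ℝ)
    (Ω : Set (Euc n)) (hΩo : IsOpen Ω) (hΩb : Bornology.IsBounded Ω)
    (αc βc q₀ L₁ : ℝ) (hαc : αc ∈ Ioo (0:ℝ) 1) (hβc : βc ∈ Ioo (0:ℝ) 1)
    (hq₀ : 1 ≤ q₀) (hL₁ : L₁ ∈ Ioo (0:ℝ) 1)
    (ξ₁ : ℝ → ℝ → ℝ) (hξ₁c : Continuous fun z : ℝ × ℝ => ξ₁ z.1 z.2)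
    (ξ₂ : ℝ → ℝ → ℝ → ℝ → ℝ)
    (hξ₂c : Continuous fun z : ℝ × ℝ × ℝ × ℝ => ξ₂ z.1 z.2.1 z.2.2.1 z.2.2.2)
    (DpH : ℝ → Euc n → Euc n → Measure (Euc n × Euc n) → Euc n)
    -- (i) contraction in the control variable
    (hLip : ∀ (s : ℝ) (x pp : Euc n) (ρ : Measure (Euc n)),
      ρ Set.univ ≤ 1 → ρ ((closure Ω)ᶜ) = 0 →
      ∀ α₁ α₂ : Euc n → Euc n,
        ContinuousOn α₁ (closure Ω) → ContinuousOn α₂ (closure Ω) →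
        (∃ C, ∀ y ∈ closure Ω, ‖α₁ y‖ ≤ C) → (∃ C, ∀ y ∈ closure Ω, ‖α₂ y‖ ≤ C) →
        ‖DpH s x pp (pushfwd ρ α₁) - DpH s x pp (pushfwd ρ α₂)‖ ≤
          L₁ * LqNormV q₀ ρ (fun y => α₁ y - α₂ y))
    -- (ii) Hölder continuity in the state marginal
    (hρHold : ∀ (s : ℝ) (x pp : Euc n) (a : Euc n → Euc n) (ρ₁ ρ₂ : Measure (Euc n)),
      ρ₁ Set.univ ≤ 1 → ρ₂ Set.univ ≤ 1 →
      ρ₁ ((closure Ω)ᶜ) = 0 → ρ₂ ((closure Ω)ᶜ) = 0 →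
      ContinuousOn a (closure Ω) → (∃ C, ∀ y ∈ closure Ω, ‖a y‖ ≤ C) →
      ‖DpH s x pp (pushfwd ρ₁ a) - DpH s x pp (pushfwd ρ₂ a)‖ ≤
        dstarX ρ₁ ρ₂ ^ βc * ξ₁ ‖pp‖ (supX Ω (fun y => ‖a y‖)))
    -- (iii) Hölder continuity in `(t,x,p)`
    (hHold : ∀ (t s : ℝ) (x y p₁ p₂ : Euc n) (μ₁ μ₂ : Measure (Euc n × Euc n)),
      μ₁ Set.univ ≤ 1 → μ₂ Set.univ ≤ 1 →
      ‖DpH t x p₁ μ₁ - DpH s y p₂ μ₂‖ ≤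
        (‖p₁ - p₂‖ ^ βc + ‖x - y‖ ^ βc + |t - s| ^ (βc / 2)) *
          ξ₂ ‖p₁‖ ‖p₂‖ (LambdaInf μ₁) (LambdaInf μ₂))
    -- bounds `Bu ≥ sup|D_xũ|`, `Bh ≥ sup|h|` (the compact ranges of `ξ₁, ξ₂`)
    (Bu Bh : ℝ) (hBh : 0 ≤ Bh) :
    ∃ C : ℝ, 0 < C ∧
      ∀ (Ku Km : ℝ) (Du : ℝ → Euc n → Euc n) (m : ℝ → Euc n → ℝ)
        (h : ℝ → Euc n → Euc n),
        0 ≤ Ku → 0 ≤ Km →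
        -- `D_xũ ∈ C^{α/2,α}(Q;ℝⁿ)` with norm `≤ Ku`, sup bounded by `Bu`
        (∀ t ∈ Icc (0:ℝ) T, ∀ x ∈ closure Ω, ‖Du t x‖ ≤ Bu ∧ ‖Du t x‖ ≤ Ku) →
        (∀ t ∈ Icc (0:ℝ) T, ∀ s ∈ Icc (0:ℝ) T, ∀ x ∈ closure Ω, ∀ y ∈ closure Ω,
          ‖Du t x - Du s y‖ ≤ Ku * (|t - s| ^ (αc / 2) + ‖x - y‖ ^ αc)) →
        -- `m ∈ C^{α/2,α}(Q)` with norm `≤ Km`, `m ≥ 0`, `∫_Ω m(t) ≤ 1`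
        (∀ t ∈ Icc (0:ℝ) T, ∀ x ∈ closure Ω, 0 ≤ m t x ∧ |m t x| ≤ Km) →
        (∀ t ∈ Icc (0:ℝ) T, ∀ s ∈ Icc (0:ℝ) T, ∀ x ∈ closure Ω, ∀ y ∈ closure Ω,
          |m t x - m s y| ≤ Km * (|t - s| ^ (αc / 2) + ‖x - y‖ ^ αc)) →
        (∀ t ∈ Icc (0:ℝ) T, (∫ x in Ω, m t x) ≤ 1) →
        -- `h` continuous and bounded by `Bh`
        ContinuousOn (fun z : ℝ × Euc n => h z.1 z.2) (Icc 0 T ×ˢ closure Ω) →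
        (∀ t ∈ Icc (0:ℝ) T, ∀ x ∈ closure Ω, ‖h t x‖ ≤ Bh) →
        -- the fixed-point equation for `h`
        (∀ t ∈ Icc (0:ℝ) T, ∀ x ∈ closure Ω,
          h t x = DpH t x (Du t x) (pushfwd (densMeas Ω (m t)) (h t))) →
        -- conclusion: `h ∈ C^{αβ/2,αβ}(Q;ℝⁿ)` with the claimed norm bound
        (∀ t ∈ Icc (0:ℝ) T, ∀ x ∈ closure Ω,
          ‖h t x‖ ≤ C * (Ku ^ βc + Km ^ βc + 1)) ∧
        (∀ t ∈ Icc (0:ℝ) T, ∀ s ∈ Icc (0:ℝ) T, ∀ x ∈ closure Ω, ∀ y ∈ closure Ω,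
          ‖h t x - h s y‖ ≤ C * (Ku ^ βc + Km ^ βc + 1) *
            (|t - s| ^ (αc * βc / 2) + ‖x - y‖ ^ (αc * βc))) := by
  obtain ⟨hα, hα1⟩ := hαc
  obtain ⟨hβ, hβ1⟩ := hβc
  obtain ⟨K, hK, hholder⟩ := exists_holder_bound_of_driftFixedPoint hΩo.measurableSet hΩb hα
    hα1.le hβ hβ1.le (by linarith) hL₁.1.le hL₁.2 hLip hρHold hHold hξ₁c hξ₂c hBh (Bu := Bu)
  have hL : 0 < 1 - L₁ := sub_pos.2 hL₁.2
  refine ⟨(K + Bh + 1) / (1 - L₁), by positivity, fun Ku Km Du m h hKu hKm hDu hDuH hm hmH hmint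
    hhc hhb hfix => ?_⟩
  have hd : DriftFixedPoint T Ω αc Ku Km Bu Bh DpH Du m h :=
    ⟨fun t ht x hx => (hDu t ht x hx).1, hDuH, fun t ht x hx => (hm t ht x hx).1, hmH, hmint,
      fun t ht => hhc.comp (Continuous.prodMk_right t).continuousOn fun x hx => ⟨ht, hx⟩,
      hhb, hfix⟩
  have hP : 1 ≤ Ku ^ βc + Km ^ βc + 1 := by
    linarith [Real.rpow_nonneg hKu βc, Real.rpow_nonneg hKm βc]
  refine ⟨fun t ht x hx => ?_, fun t ht s hs x hx y hy => ?_⟩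
  · calc ‖h t x‖ ≤ Bh := hhb t ht x hx
      _ ≤ (K + Bh + 1) / (1 - L₁) := by rw [le_div_iff₀ hL]; nlinarith [hL₁.1]
      _ ≤ _ := le_mul_of_one_le_right (by positivity) hP
  · refine (hholder hKu hKm hd t ht s hs x hx y hy).trans ?_
    rw [div_mul_eq_mul_div, div_mul_eq_mul_div]
    gcongr
    linarith

/-- parabolic Hölder regularity of the fixed-point drift
`h(t,x) = D_pH(t,x,D_xũ(t,x),(I,h(t,·))#(m(t,·)dx))`. -/
theorem stmt_14
    {n : ℕ} (hn : 1 ≤ n) (T : ℝ) (hT : 0 < T)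
    (Ω : Set (Euc n)) (hΩo : IsOpen Ω) (hΩb : Bornology.IsBounded Ω) (hΩne : Ω.Nonempty)
    (αc βc q₀ L₁ : ℝ) (hαc : αc ∈ Ioo (0:ℝ) 1) (hβc : βc ∈ Ioo (0:ℝ) 1)
    (hq₀ : 1 ≤ q₀) (hL₁ : L₁ ∈ Ioo (0:ℝ) 1)
    (ξ₁ : ℝ → ℝ → ℝ) (hξ₁c : Continuous fun z : ℝ × ℝ => ξ₁ z.1 z.2)
    (hξ₁pos : ∀ s r, 0 ≤ ξ₁ s r)
    (ξ₂ : ℝ → ℝ → ℝ → ℝ → ℝ)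
    (hξ₂c : Continuous fun z : ℝ × ℝ × ℝ × ℝ => ξ₂ z.1 z.2.1 z.2.2.1 z.2.2.2)
    (hξ₂pos : ∀ a b c d, 0 ≤ ξ₂ a b c d)
    (DpH : ℝ → Euc n → Euc n → Measure (Euc n × Euc n) → Euc n)
    -- (i) contraction in the control variable
    (hLip : ∀ (s : ℝ) (x pp : Euc n) (ρ : Measure (Euc n)),
      ρ Set.univ ≤ 1 → ρ ((closure Ω)ᶜ) = 0 →
      ∀ α₁ α₂ : Euc n → Euc n,
        ContinuousOn α₁ (closure Ω) → ContinuousOn α₂ (closure Ω) →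
        (∃ C, ∀ y ∈ closure Ω, ‖α₁ y‖ ≤ C) → (∃ C, ∀ y ∈ closure Ω, ‖α₂ y‖ ≤ C) →
        ‖DpH s x pp (pushfwd ρ α₁) - DpH s x pp (pushfwd ρ α₂)‖ ≤
          L₁ * LqNormV q₀ ρ (fun y => α₁ y - α₂ y))
    -- (ii) Hölder continuity in the state marginal
    (hρHold : ∀ (s : ℝ) (x pp : Euc n) (a : Euc n → Euc n) (ρ₁ ρ₂ : Measure (Euc n)),
      ρ₁ Set.univ ≤ 1 → ρ₂ Set.univ ≤ 1 →
      ρ₁ ((closure Ω)ᶜ) = 0 → ρ₂ ((closure Ω)ᶜ) = 0 →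
      ContinuousOn a (closure Ω) → (∃ C, ∀ y ∈ closure Ω, ‖a y‖ ≤ C) →
      ‖DpH s x pp (pushfwd ρ₁ a) - DpH s x pp (pushfwd ρ₂ a)‖ ≤
        dstarX ρ₁ ρ₂ ^ βc * ξ₁ ‖pp‖ (supX Ω (fun y => ‖a y‖)))
    -- (iii) Hölder continuity in `(t,x,p)`
    (hHold : ∀ (t s : ℝ) (x y p₁ p₂ : Euc n) (μ₁ μ₂ : Measure (Euc n × Euc n)),
      μ₁ Set.univ ≤ 1 → μ₂ Set.univ ≤ 1 →
      ‖DpH t x p₁ μ₁ - DpH s y p₂ μ₂‖ ≤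
        (‖p₁ - p₂‖ ^ βc + ‖x - y‖ ^ βc + |t - s| ^ (βc / 2)) *
          ξ₂ ‖p₁‖ ‖p₂‖ (LambdaInf μ₁) (LambdaInf μ₂))
    -- bounds `Bu ≥ sup|D_xũ|`, `Bh ≥ sup|h|` (the compact ranges of `ξ₁, ξ₂`)
    (Bu Bh : ℝ) (hBu : 0 ≤ Bu) (hBh : 0 ≤ Bh) :
    ∃ C : ℝ, 0 < C ∧
      ∀ (Ku Km : ℝ) (Du : ℝ → Euc n → Euc n) (m : ℝ → Euc n → ℝ)
        (h : ℝ → Euc n → Euc n),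
        0 ≤ Ku → 0 ≤ Km →
        -- `D_xũ ∈ C^{α/2,α}(Q;ℝⁿ)` with norm `≤ Ku`, sup bounded by `Bu`
        (∀ t ∈ Icc (0:ℝ) T, ∀ x ∈ closure Ω, ‖Du t x‖ ≤ Bu ∧ ‖Du t x‖ ≤ Ku) →
        (∀ t ∈ Icc (0:ℝ) T, ∀ s ∈ Icc (0:ℝ) T, ∀ x ∈ closure Ω, ∀ y ∈ closure Ω,
          ‖Du t x - Du s y‖ ≤ Ku * (|t - s| ^ (αc / 2) + ‖x - y‖ ^ αc)) →
        -- `m ∈ C^{α/2,α}(Q)` with norm `≤ Km`, `m ≥ 0`, `∫_Ω m(t) ≤ 1`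
        (∀ t ∈ Icc (0:ℝ) T, ∀ x ∈ closure Ω, 0 ≤ m t x ∧ |m t x| ≤ Km) →
        (∀ t ∈ Icc (0:ℝ) T, ∀ s ∈ Icc (0:ℝ) T, ∀ x ∈ closure Ω, ∀ y ∈ closure Ω,
          |m t x - m s y| ≤ Km * (|t - s| ^ (αc / 2) + ‖x - y‖ ^ αc)) →
        (∀ t ∈ Icc (0:ℝ) T, (∫ x in Ω, m t x) ≤ 1) →
        -- `h` continuous and bounded by `Bh`
        ContinuousOn (fun z : ℝ × Euc n => h z.1 z.2) (Icc 0 T ×ˢ closure Ω) →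
        (∀ t ∈ Icc (0:ℝ) T, ∀ x ∈ closure Ω, ‖h t x‖ ≤ Bh) →
        -- the fixed-point equation for `h`
        (∀ t ∈ Icc (0:ℝ) T, ∀ x ∈ closure Ω,
          h t x = DpH t x (Du t x) (pushfwd (densMeas Ω (m t)) (h t))) →
        -- conclusion: `h ∈ C^{αβ/2,αβ}(Q;ℝⁿ)` with the claimed norm bound
        (∀ t ∈ Icc (0:ℝ) T, ∀ x ∈ closure Ω,
          ‖h t x‖ ≤ C * (Ku ^ βc + Km ^ βc + 1)) ∧
        (∀ t ∈ Icc (0:ℝ) T, ∀ s ∈ Icc (0:ℝ) T, ∀ x ∈ closure Ω, ∀ y ∈ closure Ω,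
          ‖h t x - h s y‖ ≤ C * (Ku ^ βc + Km ^ βc + 1) *
            (|t - s| ^ (αc * βc / 2) + ‖x - y‖ ^ (αc * βc))) :=
  stmt_14_general T Ω hΩo hΩb αc βc q₀ L₁ hαc hβc hq₀ hL₁ ξ₁ hξ₁c ξ₂ hξ₂c DpH hLip hρHold hHold Bu
    Bh hBh
end
end
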